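/- Under the same setup (X bounded a.s., ε independent of X with E[ε²] < ∞, C independent of (ε, X), T = exp(X^⊤β⁰ + ε), δ = 1_{T≤C}, Y = min(T,C), G_0(t) = P(C > t) continuous with G_0(T) ≥ ζ_0 > 0 a.s.), the weighted Hessian identity holds, entrywise: E[ (δ / G_0(Y)) · h_τ(ε) · X X^⊤ ] = E[h_τ(ε)] · E[X X^⊤]. -/

import Mathlib

open MeasureTheory ProbabilityTheory

noncomputable section

/-- `h_τ(x) = 2τ 1_{x≥0} + 2(1-τ) 1_{x<0}`. -/
def hExp (τ x : ℝ) : ℝ := if 0 ≤ x then 2 * τ else 2 * (1 - τ)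

/-!
Given `W = (ε, X)`, the failure time `T` is determined and, `C` being independent of `W`, the
weight `δ / P(C ≥ T)` has conditional mean one, so it drops out of the expectation. Continuity of
`G₀` gives `P(C ≥ t) = P(C > t) = G₀(t)`, and `Y = T` on `{δ = 1}`. What is left,
`E[h_τ(ε) X_j X_k]`, factorises because `ε` and `X` are independent.
-/

open Set

lemma measurable_hExp (τ : ℝ) : Measurable (hExp τ) :=
  Measurable.ite (measurableSet_le measurable_const measurable_id) measurable_const measurable_const

lemma measureReal_Ici_eq_measureReal_Ioi {κ : Measure ℝ} [IsFiniteMeasure κ] {t : ℝ}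
    (h : ContinuousWithinAt (fun s => κ.real (Ioi s)) (Iio t) t) :
    κ.real (Ici t) = κ.real (Ioi t) := by
  refine le_antisymm (ge_of_tendsto h ?_) (measureReal_mono Ioi_subset_Ici_self)
  filter_upwards [self_mem_nhdsWithin] with s hs
  exact measureReal_mono (Ici_subset_Ioi.mpr hs)

/-- The inverse-probability-of-censoring weight `1_{t ≤ c} / P(C ≥ t)` of a failure time `t`
observed with censoring time `c`, where `κ` is the law of `C`. -/
def ipcw (κ : Measure ℝ) (t c : ℝ) : ℝ := (if t ≤ c then 1 else 0) / κ.real (Ici t)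

section InverseProbabilityWeighting

variable {β : Type*} [MeasurableSpace β] {κ : Measure ℝ}

lemma ipcw_mul_eq_indicator (t a : ℝ) :
    (fun c => ipcw κ t c * a) = (Ici t).indicator fun _ => a / κ.real (Ici t) := by
  ext c
  by_cases h : t ≤ c <;> simp [ipcw, h, div_eq_inv_mul]

lemma ipcw_nonneg (t c : ℝ) : 0 ≤ ipcw κ t c :=
  div_nonneg (by split_ifs <;> norm_num) measureReal_nonneg

lemma integral_ipcw_mul {t : ℝ} (ht : κ.real (Ici t) ≠ 0) (a : ℝ) :
    ∫ c, ipcw κ t c * a ∂κ = a := by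
  rw [ipcw_mul_eq_indicator, integral_indicator_const _ measurableSet_Ici, smul_eq_mul,
    mul_div_cancel₀ _ ht]

lemma measurable_measureReal_Ici [IsFiniteMeasure κ] : Measurable fun t => κ.real (Ici t) :=
  Antitone.measurable fun _ _ hst => measureReal_mono (Ici_subset_Ici.mpr hst)

lemma measurable_ipcw [IsFiniteMeasure κ] : Measurable (Function.uncurry (ipcw κ)) :=
  (Measurable.ite (measurableSet_le measurable_fst measurable_snd) measurable_const
    measurable_const).div (measurable_measureReal_Ici.comp measurable_fst)

variable [IsFiniteMeasure κ] {φ g : β → ℝ}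

lemma measurable_ipcw_mul (hφ : Measurable φ) (hg : Measurable g) :
    Measurable fun q : β × ℝ => ipcw κ (φ q.1) q.2 * g q.1 :=
  (measurable_ipcw.comp ((hφ.comp measurable_fst).prodMk measurable_snd)).mul
    (hg.comp measurable_fst)

/-- The weighted integrand is integrable exactly when `g` is, so both sides vanish together. -/
lemma integral_prod_ipcw_mul {ν : Measure β} [SFinite ν] (hφ : Measurable φ) (hg : Measurable g)
    (hpos : ∀ᵐ w ∂ν, κ.real (Ici (φ w)) ≠ 0) :
    ∫ q, ipcw κ (φ q.1) q.2 * g q.1 ∂(ν.prod κ) = ∫ w, g w ∂ν := by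
  have hFm : AEStronglyMeasurable (fun q : β × ℝ => ipcw κ (φ q.1) q.2 * g q.1) (ν.prod κ) :=
    (measurable_ipcw_mul hφ hg).aestronglyMeasurable
  have hinner : ∀ᵐ w ∂ν, ∫ c, ‖ipcw κ (φ w) c * g w‖ ∂κ = ‖g w‖ := by
    filter_upwards [hpos] with w hw
    simp only [norm_mul, Real.norm_of_nonneg (ipcw_nonneg _ _)]
    exact integral_ipcw_mul hw _
  by_cases hgi : Integrable g ν
  · have hFi : Integrable (fun q : β × ℝ => ipcw κ (φ q.1) q.2 * g q.1) (ν.prod κ) := by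
      refine (integrable_prod_iff hFm).mpr ⟨.of_forall fun w => ?_, ?_⟩
      · simp only [ipcw_mul_eq_indicator]
        exact (integrable_const _).indicator measurableSet_Ici
      · exact hgi.norm.congr (hinner.mono fun _ h => h.symm)
    rw [integral_prod _ hFi]
    refine integral_congr_ae ?_
    filter_upwards [hpos] with w hw
    exact integral_ipcw_mul hw (g w)
  · have hFi : ¬ Integrable (fun q : β × ℝ => ipcw κ (φ q.1) q.2 * g q.1) (ν.prod κ) :=
      fun hFi => hgi <| (integrable_norm_iff hg.aestronglyMeasurable).mp <|
        ((integrable_prod_iff hFm).mp hFi).2.congr hinner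
    rw [integral_undef hFi, integral_undef hgi]

lemma integral_ipcw_mul_of_indepFun {Ω : Type*} [MeasurableSpace Ω]
    {μ : Measure Ω} [IsFiniteMeasure μ] {W : Ω → β} {T C : Ω → ℝ}
    (hW : Measurable W) (hC : Measurable C) (hWC : IndepFun W C μ)
    (hφ : Measurable φ) (hg : Measurable g) (hT : ∀ ω, T ω = φ (W ω))
    (hpos : ∀ᵐ ω ∂μ, (μ.map C).real (Ici (T ω)) ≠ 0) :
    ∫ ω, ipcw (μ.map C) (T ω) (C ω) * g (W ω) ∂μ = ∫ ω, g (W ω) ∂μ := by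
  obtain rfl : T = φ ∘ W := funext hT
  have hpos' : ∀ᵐ w ∂(μ.map W), (μ.map C).real (Ici (φ w)) ≠ 0 :=
    (ae_map_iff hW.aemeasurable
      ((measurable_measureReal_Ici.comp hφ) (measurableSet_singleton 0).compl)).mpr hpos
  have hjoint : μ.map (fun ω => (W ω, C ω)) = (μ.map W).prod (μ.map C) :=
    (indepFun_iff_map_prod_eq_prod_map_map hW.aemeasurable hC.aemeasurable).mp hWC
  rw [← integral_map hW.aemeasurable hg.aestronglyMeasurable,
    ← integral_prod_ipcw_mul hφ hg hpos', ← hjoint,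
    integral_map (hW.prodMk hC).aemeasurable (measurable_ipcw_mul hφ hg).aestronglyMeasurable]
  rfl

end InverseProbabilityWeighting

theorem censored_expectile_hessian_identity_general
    {Ω : Type*} [MeasurableSpace Ω] (μ : Measure Ω) [IsProbabilityMeasure μ]
    {p : ℕ} (τ : ℝ)
    (X : Ω → Fin p → ℝ) (ε : Ω → ℝ) (C : Ω → ℝ)
    (hXm : Measurable X) (hεm : Measurable ε) (hCm : Measurable C)
    (hIndεX : IndepFun ε X μ)
    (hIndC : IndepFun C (fun ω => (ε ω, X ω)) μ)
    (β0 : Fin p → ℝ)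
    (T : Ω → ℝ) (hT : ∀ ω, T ω = Real.exp ((∑ j, X ω j * β0 j) + ε ω))
    (δ : Ω → ℝ) (hδ : ∀ ω, δ ω = if T ω ≤ C ω then 1 else 0)
    (Y : Ω → ℝ) (hY : ∀ ω, Y ω = min (T ω) (C ω))
    (G0 : ℝ → ℝ) (hG0 : ∀ t, G0 t = (μ {ω | t < C ω}).toReal)
    (hG0cont : Continuous G0)
    (ζ0 : ℝ) (hζ0 : 0 < ζ0) (hG0T : ∀ᵐ ω ∂μ, ζ0 ≤ G0 (T ω)) :
    ∀ j k,
      (∫ ω, (δ ω / G0 (Y ω)) * hExp τ (ε ω) * X ω j * X ω k ∂μ)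
        = (∫ ω, hExp τ (ε ω) ∂μ) * ∫ ω, X ω j * X ω k ∂μ := by
  intro j k
  have hsurv : (fun s => (μ.map C).real (Ioi s)) = G0 := funext fun s => by
    rw [map_measureReal_apply hCm measurableSet_Ioi, hG0]; rfl
  have hG0_Ici (t : ℝ) : G0 t = (μ.map C).real (Ici t) := by
    rw [measureReal_Ici_eq_measureReal_Ioi (hsurv ▸ hG0cont.continuousWithinAt), ← hsurv]
  have hweight (ω : Ω) : δ ω / G0 (Y ω) = ipcw (μ.map C) (T ω) (C ω) := by
    by_cases h : T ω ≤ C ω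
    · rw [hδ, hY, min_eq_left h, hG0_Ici, ipcw, if_pos h]
    · rw [hδ, ipcw, if_neg h, zero_div, zero_div]
  have hpos : ∀ᵐ ω ∂μ, (μ.map C).real (Ici (T ω)) ≠ 0 := by
    filter_upwards [hG0T] with ω h
    rw [← hG0_Ici]
    exact (hζ0.trans_le h).ne'
  have hprod : Measurable fun x : Fin p → ℝ => x j * x k :=
    (measurable_pi_apply j).mul (measurable_pi_apply k)
  calc (∫ ω, (δ ω / G0 (Y ω)) * hExp τ (ε ω) * X ω j * X ω k ∂μ)
      = ∫ ω, ipcw (μ.map C) (T ω) (C ω) * (hExp τ (ε ω) * (X ω j * X ω k)) ∂μ := by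
        simp only [hweight, mul_assoc]
    _ = ∫ ω, hExp τ (ε ω) * (X ω j * X ω k) ∂μ :=
        integral_ipcw_mul_of_indepFun (hεm.prodMk hXm) hCm hIndC.symm
          (φ := fun w => Real.exp ((∑ i, w.2 i * β0 i) + w.1)) (by fun_prop)
          ((measurable_hExp τ).comp measurable_fst |>.mul (hprod.comp measurable_snd)) hT hpos
    _ = (∫ ω, hExp τ (ε ω) ∂μ) * ∫ ω, X ω j * X ω k ∂μ :=
        (hIndεX.comp (measurable_hExp τ) hprod).integral_mul_eq_mul_integral
          ((measurable_hExp τ).comp hεm).aestronglyMeasurable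
          (hprod.comp hXm).aestronglyMeasurable

/-- under the AFT setup (`X` a.s. bounded, `ε ⟂ X` with
`E[ε²] < ∞`, `C ⟂ (ε,X)`, `T = exp(X^⊤β⁰ + ε)`, `δ = 1_{T≤C}`, `Y = min(T,C)`,
`G₀(t) = P(C > t)` continuous with `G₀(T) ≥ ζ₀ > 0` a.s.), the weighted Hessian
identity holds entrywise: `E[(δ / G₀(Y)) h_τ(ε) X X^⊤] = E[h_τ(ε)] E[X X^⊤]`. -/
theorem censored_expectile_hessian_identity
    {Ω : Type*} [MeasurableSpace Ω] (μ : Measure Ω) [IsProbabilityMeasure μ]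
    {p : ℕ} (τ : ℝ) (hτ : τ ∈ Set.Ioo (0 : ℝ) 1)
    (X : Ω → Fin p → ℝ) (ε : Ω → ℝ) (C : Ω → ℝ)
    (hXm : Measurable X) (hεm : Measurable ε) (hCm : Measurable C)
    (hXbd : ∃ c : ℝ, ∀ᵐ ω ∂μ, ∀ j, |X ω j| ≤ c)
    (hIndεX : IndepFun ε X μ)
    (hε2 : Integrable (fun ω => ε ω ^ 2) μ)
    (hIndC : IndepFun C (fun ω => (ε ω, X ω)) μ)
    (β0 : Fin p → ℝ)
    (T : Ω → ℝ) (hT : ∀ ω, T ω = Real.exp ((∑ j, X ω j * β0 j) + ε ω))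
    (δ : Ω → ℝ) (hδ : ∀ ω, δ ω = if T ω ≤ C ω then 1 else 0)
    (Y : Ω → ℝ) (hY : ∀ ω, Y ω = min (T ω) (C ω))
    (G0 : ℝ → ℝ) (hG0 : ∀ t, G0 t = (μ {ω | t < C ω}).toReal)
    (hG0cont : Continuous G0)
    (ζ0 : ℝ) (hζ0 : 0 < ζ0) (hG0T : ∀ᵐ ω ∂μ, ζ0 ≤ G0 (T ω)) :
    ∀ j k,
      (∫ ω, (δ ω / G0 (Y ω)) * hExp τ (ε ω) * X ω j * X ω k ∂μ)
        = (∫ ω, hExp τ (ε ω) ∂μ) * ∫ ω, X ω j * X ω k ∂μ :=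
  censored_expectile_hessian_identity_general μ τ X ε C hXm hεm hCm hIndεX hIndC β0 T hT δ hδ Y hY
    G0 hG0 hG0cont ζ0 hζ0 hG0T
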